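/- arXiv:1702.05902 — 4 statements merged into one kernel-verified Lean document; each statement's English description precedes it below -/
import Mathlib

section
/- Let Λ be a ring, G a finite group acting on Λ by ring automorphisms with |G| invertible in Λ, and Γ = ΛG the skew group algebra. For every left Γ-module X, the Γ-linear map F(H X) = Γ ⊗_Λ X → X sending γ ⊗ x to γx is a split epimorphism of left Γ-modules, naturally in X; that is, the natural transformation from FH to the identity functor of the category of left Γ-modules is a split epimorphism. -/
open CategoryTheory Limits DirectSum

universe u

variable {Λ Γ G : Type u} [Ring Λ] [Ring Γ] [Group G] [Fintype G]

/-- A realization of the skew group algebra `ΛG` for an action `φ` of the finite group `G` on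
the ring `Λ` by ring automorphisms: a ring `Γ` containing `Λ` (via the injective ring
homomorphism `i`) together with a group homomorphism `g : G → Γˣ` such that
`g(σ)λ = σ(λ)g(σ)` for all `λ ∈ Λ`, `σ ∈ G`, and `Γ` is free as a left `Λ`-module with
basis `(g(σ))_{σ ∈ G}`. -/
structure IsSkewGroupAlgebra (φ : G →* RingAut Λ) (i : Λ →+* Γ) (g : G →* Γˣ) : Prop where
  injective : Function.Injective i
  comm : ∀ (σ : G) (a : Λ), (g σ : Γ) * i a = i (φ σ a) * (g σ : Γ)
  free : Function.Bijective (fun c : G → Λ => ∑ σ : G, i (c σ) * (g σ : Γ))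

/-!
This is the averaging trick of Maschke's theorem. The unit `η : H X → H (F (H X))` of the
adjunction is only `Λ`-linear, but the average `|G|⁻¹ ∑ σ, g σ ∘ η ∘ g σ⁻¹` of its conjugates is
`Γ`-linear: it commutes with every `g τ` by reindexing, and with `Λ` because conjugation by
`g σ` maps `Λ` to itself; and `Γ` is spanned by `Λ` and `g G`. Averaging commutes with
composition by `Γ`-linear maps and fixes the identity, so the averaged units form a natural
transformation, and averaging the triangle identity `H ε ∘ η = id` shows that it is a section
of the counit.
-/

section ConjAverage

variable {M N P : Type*} [AddCommGroup M] [Module Γ M] [AddCommGroup N] [Module Γ N]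
  [AddCommGroup P] [Module Γ P] (g : G →* Γˣ) (hG : IsUnit (Fintype.card G : Γ))

lemma IsUnit.commute_unit_inv_natCast {n : ℕ} (hn : IsUnit (n : Γ)) (γ : Γ) :
    Commute (↑hn.unit⁻¹ : Γ) γ :=
  Commute.units_inv_left (by rw [hn.unit_spec]; exact Nat.cast_commute n γ)

noncomputable def conjAverage (f : M → N) (x : M) : N :=
  (↑hG.unit⁻¹ : Γ) • ∑ σ : G, (g σ : Γ) • f ((g σ⁻¹ : Γ) • x)

lemma conjAverage_units_smul (f : M → N) (τ : G) (x : M) :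
    conjAverage g hG f ((g τ : Γ) • x) = (g τ : Γ) • conjAverage g hG f x := by
  have reindex : ∑ σ : G, (g σ : Γ) • f ((g σ⁻¹ : Γ) • (g τ : Γ) • x)
      = ∑ ρ : G, (g τ : Γ) • (g ρ : Γ) • f ((g ρ⁻¹ : Γ) • x) := by
    refine Fintype.sum_equiv (Equiv.mulLeft τ⁻¹) _ _ fun σ => ?_
    simp only [Equiv.coe_mulLeft, smul_smul, ← Units.val_mul, ← map_mul, mul_inv_rev, inv_inv,
      mul_inv_cancel_left]
  rw [conjAverage, conjAverage, reindex, ← Finset.smul_sum, smul_smul, smul_smul,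
    (hG.commute_unit_inv_natCast _).eq]

lemma conjAverage_smul_of_comm {φ : G →* RingAut Λ} {i : Λ →+* Γ}
    (hcomm : ∀ (σ : G) (a : Λ), (g σ : Γ) * i a = i (φ σ a) * (g σ : Γ))
    (f : M → N) (hf : ∀ (a : Λ) (x : M), f (i a • x) = i a • f x) (a : Λ) (x : M) :
    conjAverage g hG f (i a • x) = i a • conjAverage g hG f x := by
  have conj : ∀ σ : G, (g σ : Γ) • f ((g σ⁻¹ : Γ) • i a • x)
      = i a • (g σ : Γ) • f ((g σ⁻¹ : Γ) • x) := by
    intro σ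
    have hφ : φ σ (φ σ⁻¹ a) = a := by rw [map_inv]; exact (φ σ).apply_symm_apply a
    rw [smul_smul, hcomm, mul_smul, hf, smul_smul, hcomm, hφ, mul_smul]
  rw [conjAverage, conjAverage, Finset.sum_congr rfl fun σ _ => conj σ, ← Finset.smul_sum,
    smul_smul, smul_smul, (hG.commute_unit_inv_natCast _).eq]

lemma conjAverage_add (f : M →+ N) (x y : M) :
    conjAverage g hG f (x + y) = conjAverage g hG f x + conjAverage g hG f y := by
  simp only [conjAverage, smul_add, map_add, Finset.sum_add_distrib]

lemma AddMonoidHom.map_smul_of_map_smul_generators {Λ : Type*} [Ring Λ] {i : Λ →+* Γ}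
    (hspan : Function.Surjective (fun c : G → Λ => ∑ σ : G, i (c σ) * (g σ : Γ)))
    (f : M →+ N) (hi : ∀ (a : Λ) (x : M), f (i a • x) = i a • f x)
    (hg : ∀ (σ : G) (x : M), f ((g σ : Γ) • x) = (g σ : Γ) • f x) (γ : Γ) (x : M) :
    f (γ • x) = γ • f x := by
  obtain ⟨c, rfl⟩ := hspan γ
  simp only [Finset.sum_smul, mul_smul, map_sum, hg, hi]

noncomputable def conjAverageLinearMap {φ : G →* RingAut Λ} {i : Λ →+* Γ}
    (hcomm : ∀ (σ : G) (a : Λ), (g σ : Γ) * i a = i (φ σ a) * (g σ : Γ))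
    (hspan : Function.Surjective (fun c : G → Λ => ∑ σ : G, i (c σ) * (g σ : Γ)))
    (f : M →+ N) (hf : ∀ (a : Λ) (x : M), f (i a • x) = i a • f x) : M →ₗ[Γ] N where
  toFun := conjAverage g hG f
  map_add' := conjAverage_add g hG f
  map_smul' := (AddMonoidHom.mk' _ (conjAverage_add g hG f)).map_smul_of_map_smul_generators g
    hspan (conjAverage_smul_of_comm g hG hcomm f hf) (conjAverage_units_smul g hG f)

lemma conjAverage_linearMap_comp (v : N →ₗ[Γ] P) (f : M → N) :
    conjAverage g hG (v ∘ f) = v ∘ conjAverage g hG f := by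
  ext x
  simp only [conjAverage, Function.comp_apply, map_smul, map_sum]

lemma conjAverage_comp_linearMap (f : M → N) (u : P →ₗ[Γ] M) :
    conjAverage g hG (f ∘ u) = conjAverage g hG f ∘ u := by
  ext x
  simp only [conjAverage, Function.comp_apply, map_smul]

lemma conjAverage_id : conjAverage g hG (id : M → M) = id := by
  ext x
  simp only [conjAverage, id, smul_smul, ← Units.val_mul, ← map_mul, mul_inv_cancel, map_one,
    Units.val_one, one_smul, Finset.sum_const, Finset.card_univ, ← Nat.cast_smul_eq_nsmul Γ]
  rw [hG.val_inv_mul, one_smul]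

end ConjAverage

universe v

section ModuleCat

open ModuleCat

variable {φ : G →* RingAut Λ} {i : Λ →+* Γ} {g : G →* Γˣ} (hskew : IsSkewGroupAlgebra φ i g)
  (hG : IsUnit (Fintype.card G : Γ)) {X Y Z : ModuleCat.{v} Γ}

noncomputable def conjAverageHom (f : (restrictScalars i).obj X ⟶ (restrictScalars i).obj Y) :
    X ⟶ Y :=
  ofHom <| conjAverageLinearMap (M := X) (N := Y) g hG hskew.comm hskew.free.2
    f.hom.toAddMonoidHom f.hom.map_smul

lemma conjAverageHom_map_comp (u : Z ⟶ X)
    (f : (restrictScalars i).obj X ⟶ (restrictScalars i).obj Y) :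
    conjAverageHom hskew hG ((restrictScalars i).map u ≫ f) = u ≫ conjAverageHom hskew hG f :=
  hom_ext <| LinearMap.ext <| congrFun (conjAverage_comp_linearMap g hG (M := X) f u.hom)

lemma conjAverageHom_comp_map (f : (restrictScalars i).obj X ⟶ (restrictScalars i).obj Y)
    (v : Y ⟶ Z) :
    conjAverageHom hskew hG (f ≫ (restrictScalars i).map v) = conjAverageHom hskew hG f ≫ v :=
  hom_ext <| LinearMap.ext <| congrFun (conjAverage_linearMap_comp g hG (N := Y) v.hom f)

lemma conjAverageHom_id : conjAverageHom hskew hG (𝟙 ((restrictScalars i).obj X)) = 𝟙 X :=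
  hom_ext <| LinearMap.ext <| congrFun (conjAverage_id g hG (M := X))

end ModuleCat

/-- Let `G` be a finite group acting on a ring `Λ` with `|G|` invertible in `Λ`, and let
`Γ = ΛG` be the skew group algebra. The counit `F(H X) = Γ ⊗_Λ X → X`, `γ ⊗ x ↦ γx`, of the
adjunction `F ⊣ H` (where `F = Γ ⊗_Λ -` is the induction functor and `H` the restriction
functor) is a split epimorphism of functors: the natural transformation `FH → 𝟭` admits a
section. -/
theorem counit_isSplitEpi_of_isSkewGroupAlgebra
    (φ : G →* RingAut Λ) (i : Λ →+* Γ) (g : G →* Γˣ)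
    (hskew : IsSkewGroupAlgebra φ i g)
    (hinv : IsUnit (Fintype.card G : Λ))
    (F : ModuleCat.{u} Λ ⥤ ModuleCat.{u} Γ)
    (adj : F ⊣ ModuleCat.restrictScalars i) :
    ∃ s : 𝟭 (ModuleCat.{u} Γ) ⟶ ModuleCat.restrictScalars i ⋙ F,
      s ≫ adj.counit = 𝟙 (𝟭 (ModuleCat.{u} Γ)) := by
  have hG : IsUnit (Fintype.card G : Γ) := by simpa only [map_natCast] using hinv.map i
  let H := ModuleCat.restrictScalars i
  refine ⟨{ app X := conjAverageHom hskew hG (adj.unit.app (H.obj X)), naturality X Y u := ?_ }, ?_⟩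
  · calc u ≫ conjAverageHom hskew hG (adj.unit.app (H.obj Y))
        = conjAverageHom hskew hG (H.map u ≫ adj.unit.app (H.obj Y)) :=
          (conjAverageHom_map_comp hskew hG u _).symm
      _ = conjAverageHom hskew hG (adj.unit.app (H.obj X) ≫ H.map (F.map (H.map u))) := by
          rw [adj.unit_naturality]
      _ = conjAverageHom hskew hG (adj.unit.app (H.obj X)) ≫ F.map (H.map u) :=
          conjAverageHom_comp_map hskew hG _ _
  · ext X : 2
    rw [NatTrans.comp_app, ← conjAverageHom_comp_map, adj.right_triangle_components]
    exact conjAverageHom_id hskew hG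
end

section
/- Let Γ be an excellent extension of an Artin algebra Λ. If I is an injective left Λ-module, then F I = Γ ⊗_Λ I is an injective left Γ-module; that is, the induction functor F preserves injective modules. -/
open CategoryTheory Limits

universe u

variable {Λ Γ : Type u} [Ring Λ] [Ring Γ]

/-- `Γ` is right `Λ`-projective (along the inclusion `i`): for every `Γ`-module `M` and every
`Γ`-submodule `N` of `M`, if the inclusion `N → M` is a split monomorphism after restriction of
scalars to `Λ`, then it is a split monomorphism of `Γ`-modules. -/
def RingHom.IsRightProjectiveExt (i : Λ →+* Γ) : Prop :=
  ∀ (M : ModuleCat.{u} Γ) (N : Submodule Γ M),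
    IsSplitMono ((ModuleCat.restrictScalars i).map (ModuleCat.ofHom N.subtype)) →
    IsSplitMono (ModuleCat.ofHom N.subtype)

/-- `Γ` is an excellent extension of `Λ` (along the injective ring homomorphism `i`):
`Γ` is free as a left `Λ`-module and free as a right `Λ`-module with a common finite
basis `γ₁, …, γₙ` satisfying `Λγₖ = γₖΛ`, and `Γ` is right `Λ`-projective. -/
structure RingHom.IsExcellentExtension (i : Λ →+* Γ) : Prop where
  injective : Function.Injective i
  free_common_basis : ∃ (n : ℕ) (γ : Fin n → Γ),
    Function.Bijective (fun c : Fin n → Λ => ∑ k, i (c k) * γ k) ∧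
    Function.Bijective (fun c : Fin n → Λ => ∑ k, γ k * i (c k)) ∧
    ∀ k, (Set.range fun a : Λ => i a * γ k) = Set.range fun a : Λ => γ k * i a
  rightProjective : i.IsRightProjectiveExt

/-!
Write `H` for restriction of scalars along `i`. Every element of `F I` is a sum `∑ γₖ • η(xₖ)` with
`η : I → H (F I)` the unit, and the normalizing condition `Λγₖ = γₖΛ` yields automorphisms `σₖ` of
`Λ` with `γₖ σₖ(a) = a γₖ`. Hence `x ↦ ∑ γₖ • η(xₖ)` is a `Λ`-linear map from `∏ₖ Iₖ`, where `Iₖ`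
is `I` with `a` acting as `σₖ(a)`. It is onto because the `η(I)` generate `F I` over `Γ` and `Γ` is
spanned by the `γₖ` on the right; it is injective because the left coordinates along the `γₖ`
give a `Λ`-map `I → H (Hom_Λ(Γ, ∏ₖ Iₖ))` whose adjoint, evaluated at `1`, inverts it. Each `Iₖ`
is injective, so `H (F I) ≅ ∏ₖ Iₖ` is an injective `Λ`-module. Right `Λ`-projectivity then lifts
the splitting of `F I` inside an injective `Γ`-module from `Λ` to `Γ`.
-/

section NormalizingBasis

variable {Λ Γ : Type*} [Ring Λ] [Ring Γ]

theorem injective_apply_of_injective_sum {ι M N : Type*} [Fintype ι]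
    [AddCommMonoid M] [AddCommMonoid N] (f : ι → M →+ N)
    (hf : Function.Injective fun c : ι → M => ∑ k, f k (c k)) (k : ι) :
    Function.Injective (f k) := fun a b hab => by
  classical
  have := @hf (Pi.single k a) (Pi.single k b) <| by
    simp only [Pi.apply_single (fun k => f k) (fun k => map_zero (f k)), Fintype.sum_pi_single',
      hab]
  simpa using congrFun this k

theorem RingHom.exists_ringEquiv_mul_map_eq_map_mul (i : Λ →+* Γ) {γ : Γ}
    (hl : Function.Injective fun a => i a * γ) (hr : Function.Injective fun a => γ * i a)
    (hγ : (Set.range fun a => i a * γ) = Set.range fun a => γ * i a) :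
    ∃ σ : Λ ≃+* Λ, ∀ a, γ * i (σ a) = i a * γ := by
  choose σ hσ using fun a => hγ ▸ Set.mem_range_self (f := fun a => i a * γ) a
  let σ' : Λ →+* Λ :=
    { toFun := σ
      map_one' := hr <| by simp only [hσ, map_one, one_mul, mul_one]
      map_mul' := fun a b => hr <| by
        simp only [hσ, map_mul, ← mul_assoc]
        simp only [mul_assoc, hσ]
      map_zero' := hr <| by simp only [hσ, map_zero, zero_mul, mul_zero]
      map_add' := fun a b => hr <| by simp only [hσ, map_add, add_mul, mul_add] }
  refine ⟨RingEquiv.ofBijective σ' ⟨fun a b hab => hl ?_, fun b => ?_⟩, hσ⟩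
  · simp only [← hσ]
    exact congrArg (γ * i ·) hab
  · obtain ⟨a, ha⟩ := hγ.symm ▸ Set.mem_range_self (f := fun a => γ * i a) b
    exact ⟨a, hr <| (hσ a).trans ha⟩

end NormalizingBasis

section LeftCoordinates

variable {Λ Γ : Type*} [Ring Λ] [Ring Γ] {i : Λ →+* Γ} {n : ℕ} {γ : Fin n → Γ}
  (hγ : Function.Bijective fun c : Fin n → Λ => ∑ k, i (c k) * γ k)

noncomputable def leftCoord :
    (ModuleCat.restrictScalars i).obj (ModuleCat.of Γ Γ) ≃ₗ[Λ] (Fin n → Λ) :=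
  (LinearEquiv.ofBijective
    (Fintype.linearCombination Λ (M := (ModuleCat.restrictScalars i).obj (ModuleCat.of Γ Γ)) γ)
    hγ).symm

theorem sum_leftCoord (g : Γ) : ∑ k, i (leftCoord hγ g k) * γ k = g :=
  (leftCoord hγ).symm_apply_apply g

theorem leftCoord_eq_of_sum_eq {g : Γ} {c : Fin n → Λ} (hc : ∑ k, i (c k) * γ k = g) :
    leftCoord hγ g = c :=
  (LinearEquiv.symm_apply_eq _).mpr hc.symm

theorem leftCoord_self (k : Fin n) : leftCoord hγ (γ k) = Pi.single k 1 :=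
  leftCoord_eq_of_sum_eq hγ <| by
    simp only [Pi.apply_single (fun l b => i b * γ l) (fun l => by simp), Fintype.sum_pi_single',
      map_one, one_mul]

theorem leftCoord_mul_map {σ : Fin n → Λ ≃+* Λ} (hσ : ∀ k a, γ k * i (σ k a) = i a * γ k)
    (g : Γ) (a : Λ) (k : Fin n) :
    leftCoord hγ (g * i a) k = leftCoord hγ g k * (σ k).symm a := by
  refine congrFun (leftCoord_eq_of_sum_eq hγ (c := fun k => leftCoord hγ g k * (σ k).symm a) ?_) k
  calc ∑ k, i (leftCoord hγ g k * (σ k).symm a) * γ k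
      = ∑ k, i (leftCoord hγ g k) * (γ k * i a) := by
        simp only [map_mul, mul_assoc, ← hσ, RingEquiv.apply_symm_apply]
    _ = g * i a := by simp only [← mul_assoc, ← Finset.sum_mul, sum_leftCoord]

end LeftCoordinates

/-- A `def` rather than an `abbrev`: for an endomorphism `σ`, Mathlib also puts the untwisted
`Module R` instance on `(ModuleCat.restrictScalars σ).obj M`, and instance search must not find it
here. -/
noncomputable def ModuleCat.twist {R : Type*} [Ring R] (σ : R ≃+* R) (M : ModuleCat R) :
    ModuleCat R :=
  (ModuleCat.restrictScalars σ.toRingHom).obj M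

theorem ModuleCat.injective_twist {R : Type*} [Ring R] (σ : R ≃+* R) {M : ModuleCat R}
    (hM : Injective M) : Injective (M.twist σ) :=
  ((ModuleCat.restrictScalarsEquivalenceOfRingEquiv σ).map_injective_iff M).mpr hM

theorem CategoryTheory.Adjunction.span_range_unit_app_eq_top {Λ Γ : Type*} [Ring Λ] [Ring Γ]
    {i : Λ →+* Γ} {F : ModuleCat Λ ⥤ ModuleCat Γ} (adj : F ⊣ ModuleCat.restrictScalars i)
    (M : ModuleCat Λ) :
    Submodule.span Γ (Set.range (α := F.obj M) (adj.unit.app M)) = ⊤ := by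
  set S := Submodule.span Γ (Set.range (α := F.obj M) (adj.unit.app M))
  let η : M ⟶ (ModuleCat.restrictScalars i).obj (ModuleCat.of Γ S) :=
    ModuleCat.ofHom (X := M) (Y := (ModuleCat.restrictScalars i).obj (ModuleCat.of Γ S))
    { toFun := fun y => ⟨adj.unit.app M y, Submodule.subset_span (Set.mem_range_self y)⟩
      map_add' := fun y z => Subtype.ext ((adj.unit.app M).hom.map_add y z)
      map_smul' := fun a y => Subtype.ext ((adj.unit.app M).hom.map_smul a y) }
  have hsection : (adj.homEquiv M _).symm η ≫ ModuleCat.ofHom S.subtype = 𝟙 (F.obj M) := by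
    apply (adj.homEquiv M (F.obj M)).injective
    rw [Adjunction.homEquiv_naturality_right, Equiv.apply_symm_apply, Adjunction.homEquiv_id]
    rfl
  refine eq_top_iff.mpr fun z _ => ?_
  rw [← show _ = z from ConcreteCategory.congr_hom hsection z]
  exact ((adj.homEquiv M _).symm η z).2

section SumSMulTwist

variable {Λ Γ : Type*} [Ring Λ] [Ring Γ] {i : Λ →+* Γ}
  {n : ℕ} {γ : Fin n → Γ} {σ : Fin n → Λ ≃+* Λ} (hσ : ∀ k a, γ k * i (σ k a) = i a * γ k)
  {I : ModuleCat Λ} {P : ModuleCat Γ}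

noncomputable def sumSMulTwist (η : I ⟶ (ModuleCat.restrictScalars i).obj P) :
    (Π k, I.twist (σ k)) →ₗ[Λ] (ModuleCat.restrictScalars i).obj P where
  toFun x := ∑ k, γ k • η (x k)
  map_add' x y := by
    rw [← Finset.sum_add_distrib]
    exact Finset.sum_congr rfl fun k _ =>
      (congrArg (γ k • ·) (η.hom.map_add (x k) (y k))).trans (smul_add ..)
  map_smul' a x := by
    change _ = i a • ∑ k, γ k • η (x k)
    rw [Finset.smul_sum]
    refine Finset.sum_congr rfl fun k _ => ?_
    calc γ k • η ((a • x) k) = γ k • i (σ k a) • η (x k) :=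
          congrArg (γ k • ·) (η.hom.map_smul (σ k a) (x k))
      _ = i a • γ k • η (x k) := by rw [smul_smul, smul_smul, hσ]

theorem sumSMulTwist_apply (η : I ⟶ (ModuleCat.restrictScalars i).obj P)
    (x : Π k, I.twist (σ k)) :
    sumSMulTwist hσ η x = ∑ k, γ k • η (x k) := rfl

theorem map_sumSMulTwist {Q : ModuleCat Γ} (η : I ⟶ (ModuleCat.restrictScalars i).obj P)
    (g : P ⟶ Q) (x : Π k, I.twist (σ k)) :
    (ModuleCat.restrictScalars i).map g (sumSMulTwist hσ η x) =
      sumSMulTwist hσ (η ≫ (ModuleCat.restrictScalars i).map g) x := by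
  rw [sumSMulTwist_apply, map_sum]
  exact Finset.sum_congr rfl fun k _ => g.hom.map_smul (γ k) (η (x k))

theorem sumSMulTwist_unit_surjective {F : ModuleCat Λ ⥤ ModuleCat Γ}
    (adj : F ⊣ ModuleCat.restrictScalars i)
    (hγ : Function.Surjective fun c : Fin n → Λ => ∑ k, γ k * i (c k)) :
    Function.Surjective (sumSMulTwist (I := I) hσ (adj.unit.app I)) := by
  set η : I ⟶ (ModuleCat.restrictScalars i).obj (F.obj I) := adj.unit.app I
  set Φ := sumSMulTwist hσ η
  have hsmul_unit (g : Γ) (y : I) : g • η y ∈ LinearMap.range Φ := by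
    obtain ⟨c, rfl⟩ := hγ g
    refine ⟨fun k => (c k • y : I), ?_⟩
    calc Φ _ = ∑ k, γ k • η (c k • y) := rfl
      _ = ∑ k, γ k • i (c k) • η y :=
          Finset.sum_congr rfl fun k _ => congrArg (γ k • ·) (η.hom.map_smul (c k) y)
      _ = _ := by simp only [smul_smul, ← Finset.sum_smul]
  rw [← LinearMap.range_eq_top, eq_top_iff]
  rintro z -
  have hz : z ∈ Submodule.span Γ (Set.range (α := F.obj I) (adj.unit.app I)) := by
    rw [adj.span_range_unit_app_eq_top]
    trivial
  induction hz using Submodule.span_induction with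
  | mem _ hy =>
    obtain ⟨y, rfl⟩ := hy
    simpa using hsmul_unit 1 y
  | zero => exact zero_mem _
  | add _ _ _ _ h h' => exact add_mem h h'
  | smul g _ _ h =>
    obtain ⟨x, rfl⟩ := h
    change g • ∑ k, γ k • η (x k) ∈ _
    rw [Finset.smul_sum]
    exact sum_mem fun k _ => smul_smul g (γ k) (η (x k)) ▸ hsmul_unit _ _

end SumSMulTwist

section Injectivity

variable {i : Λ →+* Γ} {n : ℕ} {γ : Fin n → Γ} {σ : Fin n → Λ ≃+* Λ}
  (hσ : ∀ k a, γ k * i (σ k a) = i a * γ k) (I : ModuleCat.{u} Λ)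

noncomputable def leftCoordHom (hγ : Function.Bijective fun c : Fin n → Λ => ∑ k, i (c k) * γ k) :
    I ⟶ (ModuleCat.restrictScalars i).obj
    ((ModuleCat.coextendScalars i).obj (ModuleCat.of Λ (Π j, I.twist (σ j)))) :=
  ModuleCat.ofHom (X := I) (Y := (ModuleCat.restrictScalars i).obj
    ((ModuleCat.coextendScalars i).obj (ModuleCat.of Λ (Π j, I.twist (σ j)))))
  { toFun z := LinearMap.pi fun j =>
      LinearMap.toSpanSingleton Λ (I.twist (σ j)) z ∘ₗ LinearMap.proj j ∘ₗ (leftCoord hγ).toLinearMap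
    map_add' z z' := LinearMap.ext fun g => funext fun j =>
      smul_add (leftCoord hγ g j) (show I.twist (σ j) from z) z'
    map_smul' a z := LinearMap.ext fun (g : Γ) => funext fun j => by
      let z' : I.twist (σ j) := z
      have hz : (σ j).symm a • z' = (show I.twist (σ j) from a • z) := by
        show σ j ((σ j).symm a) • z = a • z
        rw [RingEquiv.apply_symm_apply]
      change leftCoord hγ g j • (show I.twist (σ j) from a • z) = leftCoord hγ (g * i a) j • z'
      rw [← hz, smul_smul, leftCoord_mul_map hγ hσ] }

theorem sumSMulTwist_unit_injective
    (hγ : Function.Bijective fun c : Fin n → Λ => ∑ k, i (c k) * γ k) {F : ModuleCat.{u} Λ ⥤ ModuleCat.{u} Γ}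
    (adj : F ⊣ ModuleCat.restrictScalars i) :
    Function.Injective (sumSMulTwist (I := I) hσ (adj.unit.app I)) := by
  set f := leftCoordHom hσ I hγ
  set g := (adj.homEquiv _ _).symm f
  have hg : adj.unit.app I ≫ (ModuleCat.restrictScalars i).map g = f :=
    (adj.homEquiv_unit _ _ _).symm.trans (Equiv.apply_symm_apply _ f)
  let r := (ModuleCat.restrictScalars i).map g ≫
    (ModuleCat.restrictCoextendScalarsAdj i).counit.app (ModuleCat.of Λ (Π j, I.twist (σ j)))
  refine Function.LeftInverse.injective (g := r) fun x => ?_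
  change (ModuleCat.restrictCoextendScalarsAdj i).counit.app _
    ((ModuleCat.restrictScalars i).map g (sumSMulTwist hσ (adj.unit.app I) x)) = x
  rw [map_sumSMulTwist, hg, sumSMulTwist_apply, map_sum]
  have hterm (k : Fin n) : (ModuleCat.restrictCoextendScalarsAdj i).counit.app
      (ModuleCat.of Λ (Π j, I.twist (σ j))) (γ k • f (x k)) = Pi.single k (x k) := by
    funext j
    change leftCoord hγ (1 * γ k : Γ) j • (show I.twist (σ j) from x k) = _
    rw [one_mul, leftCoord_self]
    rcases eq_or_ne j k with rfl | hjk
    · rw [Pi.single_eq_same, Pi.single_eq_same]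
      exact one_smul Λ _
    · rw [Pi.single_eq_of_ne hjk, Pi.single_eq_of_ne hjk]
      exact zero_smul Λ _
  rw [Finset.sum_congr rfl fun k _ => hterm k]
  exact Finset.univ_sum_single x

end Injectivity

theorem injective_restrictScalars_obj_of_normalizing_basis {i : Λ →+* Γ} {n : ℕ} {γ : Fin n → Γ}
    (hleft : Function.Bijective fun c : Fin n → Λ => ∑ k, i (c k) * γ k)
    (hright : Function.Surjective fun c : Fin n → Λ => ∑ k, γ k * i (c k))
    {σ : Fin n → Λ ≃+* Λ} (hσ : ∀ k a, γ k * i (σ k a) = i a * γ k)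
    {F : ModuleCat.{u} Λ ⥤ ModuleCat.{u} Γ} (adj : F ⊣ ModuleCat.restrictScalars i)
    {I : ModuleCat.{u} Λ} (hI : Injective I) :
    Injective ((ModuleCat.restrictScalars i).obj (F.obj I)) := by
  have (k : Fin n) : Module.Injective Λ (I.twist (σ k)) :=
    Module.injective_module_of_injective_object (inj := I.injective_twist (σ k) hI) ..
  let e := LinearEquiv.ofBijective (sumSMulTwist (I := I) hσ (adj.unit.app I))
    ⟨sumSMulTwist_unit_injective hσ I hleft adj, sumSMulTwist_unit_surjective hσ adj hright⟩
  exact Injective.of_iso e.toModuleIso (Module.injective_object_of_injective_module ..)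

theorem RingHom.IsRightProjectiveExt.injective_of_injective_restrictScalars_obj {i : Λ →+* Γ}
    (hi : i.IsRightProjectiveExt) {M : ModuleCat.{u} Γ}
    (hM : Injective ((ModuleCat.restrictScalars i).obj M)) : Injective M := by
  let ι := Injective.ι M
  let N := LinearMap.range ι.hom
  let e : M ≅ ModuleCat.of Γ N :=
    (LinearEquiv.ofInjective ι.hom ((ModuleCat.mono_iff_injective ι).mp inferInstance)).toModuleIso
  have : Mono (ModuleCat.ofHom N.subtype) :=
    (ModuleCat.mono_iff_injective _).mpr N.injective_subtype
  have : Injective ((ModuleCat.restrictScalars i).obj (ModuleCat.of Γ N)) :=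
    Injective.of_iso ((ModuleCat.restrictScalars i).mapIso e) hM
  have : IsSplitMono (ModuleCat.ofHom N.subtype) :=
    hi _ N (IsSplitMono.mk' ⟨Injective.factorThru (𝟙 _) _, Injective.comp_factorThru _ _⟩)
  have : Injective (ModuleCat.of Γ N) :=
    Retract.injective (i := Injective.injective_under M) ⟨ModuleCat.ofHom N.subtype, retraction _, IsSplitMono.id _⟩
  exact Injective.of_iso e.symm this

theorem induction_preserves_injective_of_isExcellentExtension_general
    (i : Λ →+* Γ) (hexc : i.IsExcellentExtension)
    (F : ModuleCat.{u} Λ ⥤ ModuleCat.{u} Γ)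
    (adj : F ⊣ ModuleCat.restrictScalars i)
    (I : ModuleCat.{u} Λ) (hI : Injective I) :
    Injective (F.obj I) := by
  obtain ⟨n, γ, hleft, hright, hnormal⟩ := hexc.free_common_basis
  choose σ hσ using fun k => i.exists_ringEquiv_mul_map_eq_map_mul
    (injective_apply_of_injective_sum (fun k => (AddMonoidHom.mulRight (γ k)).comp i.toAddMonoidHom)
      hleft.1 k)
    (injective_apply_of_injective_sum (fun k => (AddMonoidHom.mulLeft (γ k)).comp i.toAddMonoidHom)
      hright.1 k)
    (hnormal k)
  exact hexc.rightProjective.injective_of_injective_restrictScalars_obj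
    (injective_restrictScalars_obj_of_normalizing_basis hleft hright.2 hσ adj hI)

/-- Let `Γ` be an excellent extension of an Artin algebra `Λ`. Then the induction functor
`F = Γ ⊗_Λ -` (encoded as a left adjoint of the restriction of scalars functor) preserves
injective modules. -/
theorem induction_preserves_injective_of_isExcellentExtension
    (R : Type u) [CommRing R] [IsArtinianRing R] [Algebra R Λ] [Module.Finite R Λ]
    (i : Λ →+* Γ) (hexc : i.IsExcellentExtension)
    (F : ModuleCat.{u} Λ ⥤ ModuleCat.{u} Γ)
    (adj : F ⊣ ModuleCat.restrictScalars i)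
    (I : ModuleCat.{u} Λ) (hI : Injective I) :
    Injective (F.obj I) :=
  induction_preserves_injective_of_isExcellentExtension_general i hexc F adj I hI
end

section
/- Let Γ be an excellent extension of an Artin algebra Λ. If there exists an injective resolution 0 → Λ → I⁰ → I¹ → ⋯ of Λ as a left Λ-module with pd_Λ I^i ≤ i for every i ≥ 0, then there exists an injective resolution 0 → Γ → J⁰ → J¹ → ⋯ of Γ as a left Γ-module with pd_Γ J^i ≤ i for every i ≥ 0. -/
open CategoryTheory Limits

universe u

variable {Λ Γ : Type u} [Ring Λ] [Ring Γ]

/-- `M` admits an injective resolution of length at most `n`. -/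
def HasInjDimLE (R : Type u) [Ring R] : ℕ → ModuleCat.{u} R → Prop
  | 0, M => Injective M
  | n + 1, M => ∃ (I : ModuleCat.{u} R) (f : M ⟶ I),
      Injective I ∧ Mono f ∧ HasInjDimLE R n (cokernel f)

/-- The injective dimension of a module, as an element of `ℕ∞`: the smallest length of an
injective resolution, or `⊤` if there is no injective resolution of finite length. -/
noncomputable def injDim (R : Type u) [Ring R] (M : ModuleCat.{u} R) : ℕ∞ :=
  sInf {d : ℕ∞ | ∃ n : ℕ, d = n ∧ HasInjDimLE R n M}

/-- `M` admits a projective resolution of length at most `n`. -/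
def HasProjDimLE (R : Type u) [Ring R] : ℕ → ModuleCat.{u} R → Prop
  | 0, M => Projective M
  | n + 1, M => ∃ (P : ModuleCat.{u} R) (f : P ⟶ M),
      Projective P ∧ Epi f ∧ HasProjDimLE R n (kernel f)

/-- The projective dimension of a module, as an element of `ℕ∞`. -/
noncomputable def projDim (R : Type u) [Ring R] (M : ModuleCat.{u} R) : ℕ∞ :=
  sInf {d : ℕ∞ | ∃ n : ℕ, d = n ∧ HasProjDimLE R n M}

/-!
Write `γ₁, …, γₙ` for the common basis. Since `Γ` is free on the `γₖ` as a right `Λ`-module,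
`Γ ⊗_Λ M` can be realised as `Mⁿ`, with `g ∈ Γ` acting through the matrix of left multiplication
by `g` in that basis. This induction functor is exact (it is `Mⁿ` on underlying groups) and left
adjoint to restriction, so it preserves projectives and does not increase projective dimension,
and it sends `Λ` to `Γ`. Since `Λγₖ = γₖΛ`, there are automorphisms `σₖ` of `Λ` with
`a γₖ = γₖ σₖ(a)`, and as a `Λ`-module the induced module of `M` is the product of the twists of
`M` by the `σₖ`; so it is `Λ`-injective when `M` is, and right `Λ`-projectivity makes it
`Γ`-injective. Inducing the given injective resolution of `Λ` therefore gives the required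
resolution of `Γ`.
-/

open Matrix

lemma Function.Exact.comp_left {M N P : Type*} [Zero P] {f : M → N} {g : N → P}
    (h : Function.Exact f g) (ι : Type*) :
    Function.Exact (fun v : ι → M => f ∘ v) (fun v : ι → N => g ∘ v) := by
  intro y
  simp only [funext_iff, Function.comp_apply, Pi.zero_apply, h _]
  constructor
  · intro hy
    choose x hx using hy
    exact ⟨x, funext hx⟩
  · rintro ⟨x, rfl⟩ k
    exact ⟨x k, rfl⟩

namespace CategoryTheory

variable {C : Type*} [Category C] [HasZeroObject C] [Preadditive C]
  {D : Type*} [Category D] [HasZeroObject D] [Preadditive D] [CategoryWithHomology D]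

noncomputable def Functor.mapInjectiveResolution (F : C ⥤ D) [F.Additive]
    [F.PreservesInjectiveObjects] [F.PreservesHomology] {Z : C} (I : InjectiveResolution Z) :
    InjectiveResolution (F.obj Z) where
  cocomplex := (F.mapHomologicalComplex _).obj I.cocomplex
  injective n := F.injective_obj_of_injective (I.injective n)
  ι := (HomologicalComplex.singleMapHomologicalComplex _ _ _).inv.app _ ≫
    (F.mapHomologicalComplex _).map I.ι
  quasiIso := inferInstance

noncomputable def InjectiveResolution.ofIso {Z Z' : D} (I : InjectiveResolution Z) (e : Z ≅ Z') :
    InjectiveResolution Z' where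
  cocomplex := I.cocomplex
  injective := I.injective
  ι := (CochainComplex.single₀ D).map e.inv ≫ I.ι
  quasiIso := inferInstance

end CategoryTheory

section ProjDim

variable {R S : Type u} [Ring R] [Ring S]

lemma HasProjDimLE.of_iso : ∀ {n : ℕ} {M N : ModuleCat.{u} R}, (M ≅ N) →
    HasProjDimLE R n M → HasProjDimLE R n N
  | 0, _, _, e, h => Projective.of_iso e h
  | _ + 1, _, _, e, ⟨P, f, hP, hf, hk⟩ =>
    ⟨P, f ≫ e.hom, hP, epi_comp' hf inferInstance, hk.of_iso (kernelCompMono f e.hom).symm⟩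

lemma HasProjDimLE.map (F : ModuleCat.{u} R ⥤ ModuleCat.{u} S) [F.PreservesZeroMorphisms]
    [F.PreservesProjectiveObjects] [F.PreservesEpimorphisms] [PreservesFiniteLimits F] :
    ∀ {n : ℕ} {M : ModuleCat.{u} R}, HasProjDimLE R n M → HasProjDimLE S n (F.obj M)
  | 0, _, h => F.projective_obj_of_projective h
  | _ + 1, _, ⟨P, f, hP, _, hk⟩ =>
    ⟨F.obj P, F.map f, F.projective_obj_of_projective hP, F.map_epi f,
      (hk.map F).of_iso (PreservesKernel.iso F f)⟩

lemma projDim_map_le (F : ModuleCat.{u} R ⥤ ModuleCat.{u} S) [F.PreservesZeroMorphisms]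
    [F.PreservesProjectiveObjects] [F.PreservesEpimorphisms] [PreservesFiniteLimits F]
    (M : ModuleCat.{u} R) : projDim S (F.obj M) ≤ projDim R M :=
  le_sInf fun _ ⟨n, hd, h⟩ => hd ▸ sInf_le ⟨n, rfl, h.map F⟩

end ProjDim

namespace RingHom.IsRightProjectiveExt

variable {i : Λ →+* Γ}

lemma isSplitMono (hi : i.IsRightProjectiveExt) {N M : ModuleCat.{u} Γ} (f : N ⟶ M) [Mono f]
    (hf : IsSplitMono ((ModuleCat.restrictScalars i).map f)) : IsSplitMono f := by
  let e : N ≅ ModuleCat.of Γ (LinearMap.range f.hom) :=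
    (LinearEquiv.ofInjective f.hom ((ModuleCat.mono_iff_injective f).1 ‹_›)).toModuleIso
  have hfactor : f = e.hom ≫ ModuleCat.ofHom (LinearMap.range f.hom).subtype := rfl
  have := hi M _ (by rw [e.eq_inv_comp.2 hfactor.symm, Functor.map_comp]; infer_instance)
  rw [hfactor]
  infer_instance

lemma injective_of_injective_restrictScalars (hi : i.IsRightProjectiveExt) {N : ModuleCat.{u} Γ}
    (hN : Injective ((ModuleCat.restrictScalars i).obj N)) : Injective N := by
  have : IsSplitMono ((ModuleCat.restrictScalars i).map (Injective.ι N)) :=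
    ⟨⟨⟨Injective.factorThru (𝟙 _) _, Injective.comp_factorThru _ _⟩⟩⟩
  have := hi.isSplitMono (Injective.ι N) this
  exact Retract.injective ⟨Injective.ι N, retraction _, IsSplitMono.id _⟩

end RingHom.IsRightProjectiveExt

namespace RingHom

structure NormalizingBasis (i : Λ →+* Γ) where
  n : ℕ
  γ : Fin n → Γ
  bijective_sum_γ_mul : Function.Bijective fun c : Fin n → Λ => ∑ k, γ k * i (c k)
  injective_sum_mul_γ : Function.Injective fun c : Fin n → Λ => ∑ k, i (c k) * γ k
  range_mul_γ_eq : ∀ k, (Set.range fun a : Λ => i a * γ k) = Set.range fun a : Λ => γ k * i a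

namespace NormalizingBasis

variable {i : Λ →+* Γ} (B : i.NormalizingBasis)

noncomputable def repr : Γ ≃+ (Fin B.n → Λ) :=
  (AddEquiv.ofBijective (F := (Fin B.n → Λ) →+ Γ)
    { toFun := fun c => ∑ k, B.γ k * i (c k)
      map_zero' := by simp
      map_add' := fun c d => by simp [mul_add, Finset.sum_add_distrib] }
    B.bijective_sum_γ_mul).symm

lemma sum_γ_mul_repr (g : Γ) : ∑ k, B.γ k * i (B.repr g k) = g :=
  B.repr.symm_apply_apply g

lemma repr_sum_γ_mul (c : Fin B.n → Λ) : B.repr (∑ k, B.γ k * i (c k)) = c :=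
  B.repr.apply_symm_apply c

lemma repr_mul_map (g : Γ) (a : Λ) : B.repr (g * i a) = fun k => B.repr g k * a := by
  conv_lhs => rw [← B.sum_γ_mul_repr g, Finset.sum_mul]
  simp only [mul_assoc, ← map_mul, repr_sum_γ_mul]

lemma repr_γ_mul_map (k : Fin B.n) (a : Λ) : B.repr (B.γ k * i a) = Pi.single k a := by
  rw [← B.repr_sum_γ_mul (Pi.single k a), Fintype.sum_eq_single k fun j hj => by simp [hj]]
  simp

lemma repr_γ (k : Fin B.n) : B.repr (B.γ k) = Pi.single k 1 := by
  simpa using B.repr_γ_mul_map k 1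

noncomputable def leftMulMatrix (g : Γ) : Matrix (Fin B.n) (Fin B.n) Λ :=
  Matrix.of fun j k => B.repr (g * B.γ k) j

lemma repr_mul (g x : Γ) : B.repr (g * x) = B.leftMulMatrix g *ᵥ B.repr x := by
  conv_lhs => rw [← B.sum_γ_mul_repr x, Finset.mul_sum]
  ext j
  simp [← mul_assoc, repr_mul_map, mulVec, dotProduct, leftMulMatrix]

noncomputable def leftMul : Γ →+* Matrix (Fin B.n) (Fin B.n) Λ where
  toFun := B.leftMulMatrix
  map_one' := by
    ext j k
    simpa [leftMulMatrix, one_apply, Pi.single_apply] using congrFun (B.repr_γ k) j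
  map_mul' g h := by
    ext j k
    simp only [leftMulMatrix, of_apply, mul_assoc, B.repr_mul g (h * B.γ k), mul_apply, mulVec,
      dotProduct]
  map_zero' := by ext; simp [leftMulMatrix]
  map_add' g h := by ext; simp [leftMulMatrix, add_mul]

lemma leftMul_apply (g : Γ) (j k : Fin B.n) : B.leftMul g j k = B.repr (g * B.γ k) j := rfl

lemma leftMul_map_eq_diagonal (a : Λ) :
    B.leftMul (i a) = diagonal fun k => B.leftMul (i a) k k := by
  ext j k
  obtain ⟨b, hb⟩ : i a * B.γ k ∈ Set.range fun b => B.γ k * i b := B.range_mul_γ_eq k ▸ ⟨a, rfl⟩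
  have hrepr : B.repr (i a * B.γ k) = Pi.single k b := by rw [← hb, repr_γ_mul_map]
  by_cases hjk : j = k
  · subst hjk; simp
  · simp [leftMul_apply, hrepr, hjk]

/-- `σₖ`, read off the diagonal of `leftMul ∘ i`. -/
noncomputable def twistHom (k : Fin B.n) : Λ →+* Λ where
  toFun a := B.leftMul (i a) k k
  map_one' := by simp
  map_mul' a b := by
    rw [map_mul, map_mul, B.leftMul_map_eq_diagonal a, B.leftMul_map_eq_diagonal b]
    simp
  map_zero' := by simp
  map_add' a b := by simp

lemma repr_map_mul_γ (a : Λ) (k : Fin B.n) :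
    B.repr (i a * B.γ k) = Pi.single k (B.twistHom k a) := by
  ext j
  by_cases hjk : j = k
  · subst hjk; simp [twistHom, leftMul_apply]
  · simpa [leftMul_apply, hjk] using congrFun (congrFun (B.leftMul_map_eq_diagonal a) j) k

lemma map_mul_γ (a : Λ) (k : Fin B.n) : i a * B.γ k = B.γ k * i (B.twistHom k a) :=
  B.repr.injective (by rw [repr_map_mul_γ, repr_γ_mul_map])

lemma twistHom_bijective (k : Fin B.n) : Function.Bijective (B.twistHom k) := by
  constructor
  · intro a a' h
    have hγ : i a * B.γ k = i a' * B.γ k := by rw [B.map_mul_γ, B.map_mul_γ, h]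
    have hsum (c : Λ) : ∑ j, i ((Pi.single k c : Fin B.n → Λ) j) * B.γ j = i c * B.γ k :=
      (Fintype.sum_eq_single k fun j hj => by simp [hj]).trans (by simp)
    have hsingle :=
      @B.injective_sum_mul_γ (Pi.single k a) (Pi.single k a') (by simp only [hsum, hγ])
    simpa using congrFun hsingle k
  · intro b
    obtain ⟨a, ha⟩ : B.γ k * i b ∈ Set.range fun a => i a * B.γ k := B.range_mul_γ_eq k ▸ ⟨b, rfl⟩
    refine ⟨a, ?_⟩
    simpa [repr_map_mul_γ, repr_γ_mul_map] using congrArg (fun g => B.repr g k) ha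

noncomputable def twist (k : Fin B.n) : Λ ≃+* Λ :=
  RingEquiv.ofBijective (B.twistHom k) (B.twistHom_bijective k)

section Induced

variable (M : Type u) [AddCommGroup M]

/-- `Γ ⊗_Λ M`, realised as `Mⁿ` through the right basis `γ`. -/
def Induced : Type u := Fin B.n → M

instance : AddCommGroup (B.Induced M) := Pi.addCommGroup

variable {B M} in
lemma induced_add_apply (v w : B.Induced M) (j : Fin B.n) : (v + w) j = v j + w j := rfl

variable {B M} in
lemma induced_sum_apply {ι : Type*} (s : Finset ι) (v : ι → B.Induced M) (j : Fin B.n) :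
    (∑ k ∈ s, v k) j = ∑ k ∈ s, v k j :=
  Finset.sum_apply (M := fun _ => M) j s v

variable [Module Λ M]

open Matrix.Module in
noncomputable instance : Module Γ (B.Induced M) := Module.compHom (Fin B.n → M) B.leftMul

variable {B M}

lemma induced_smul_apply (g : Γ) (v : B.Induced M) (j : Fin B.n) :
    (g • v) j = ∑ k, B.leftMul g j k • v k := rfl

lemma induced_map_smul_apply (a : Λ) (v : B.Induced M) (j : Fin B.n) :
    (i a • v) j = B.twistHom j a • v j := by
  rw [induced_smul_apply, B.leftMul_map_eq_diagonal a]
  simp [diagonal_apply, twistHom]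

/-- `x ⊗ m`. -/
noncomputable def tmul (B : i.NormalizingBasis) (x : Γ) (m : M) : B.Induced M :=
  fun k => B.repr x k • m

lemma smul_tmul (g x : Γ) (m : M) : g • B.tmul x m = B.tmul (g * x) m := by
  funext j
  simp [induced_smul_apply, tmul, smul_smul, ← Finset.sum_smul, B.repr_mul g x, mulVec,
    dotProduct, leftMul]

lemma tmul_smul (x : Γ) (a : Λ) (m : M) : B.tmul x (a • m) = B.tmul (x * i a) m := by
  funext k
  simp [tmul, repr_mul_map, mul_smul]

lemma tmul_add (x : Γ) (m m' : M) : B.tmul x (m + m') = B.tmul x m + B.tmul x m' := by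
  funext k
  exact smul_add _ _ _

lemma sum_tmul_γ (v : B.Induced M) : ∑ k, B.tmul (B.γ k) (v k) = v := by
  funext j
  simp only [induced_sum_apply, tmul, repr_γ, Pi.single_apply, ite_smul, one_smul, zero_smul]
  exact Fintype.sum_ite_eq j _

variable {X : Type*} [AddCommGroup X] [Module Γ X]

noncomputable def liftEquiv (B : i.NormalizingBasis) : (B.Induced M →ₗ[Γ] X) ≃ (M →ₛₗ[i] X) where
  toFun φ :=
    { toFun m := φ (B.tmul 1 m)
      map_add' m m' := by rw [tmul_add, map_add]
      map_smul' a m := by rw [tmul_smul, one_mul, ← map_smul, smul_tmul, mul_one] }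
  invFun ψ :=
    { toFun v := ∑ k, B.γ k • ψ (v k)
      map_add' v w := by simp only [induced_add_apply, map_add, smul_add, Finset.sum_add_distrib]
      map_smul' g v := by
        have hψ (k : Fin B.n) : ψ ((g • v) k) = ∑ l, i (B.repr (g * B.γ l) k) • ψ (v l) := by
          simp [induced_smul_apply, leftMul_apply]
        simp only [hψ, Finset.smul_sum, smul_smul, RingHom.id_apply]
        refine Finset.sum_comm.trans (Finset.sum_congr rfl fun l _ => ?_)
        rw [← Finset.sum_smul, B.sum_γ_mul_repr, mul_smul] }
  left_inv φ := by
    ext v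
    simp only [LinearMap.coe_mk, AddHom.coe_mk, ← map_smul, smul_tmul, mul_one, ← map_sum,
      sum_tmul_γ]
  right_inv ψ := by
    ext m
    simp only [LinearMap.coe_mk, AddHom.coe_mk, tmul, map_smulₛₗ, smul_smul, ← Finset.sum_smul,
      B.sum_γ_mul_repr, one_smul]

end Induced

noncomputable def inducedSelfEquiv : B.Induced Λ ≃ₗ[Γ] Γ where
  toFun v := B.repr.symm v
  invFun x := B.repr x
  map_add' := map_add B.repr.symm
  map_smul' g v := by
    change B.repr.symm (B.leftMulMatrix g *ᵥ v) = g * B.repr.symm v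
    apply B.repr.injective
    rw [B.repr_mul, B.repr.apply_symm_apply]
    exact congrArg _ (B.repr.apply_symm_apply v).symm
  left_inv := B.repr.apply_symm_apply
  right_inv := B.repr.symm_apply_apply

noncomputable def induction : ModuleCat.{u} Λ ⥤ ModuleCat.{u} Γ where
  obj M := ModuleCat.of Γ (B.Induced M)
  map {M N} f := ModuleCat.ofHom
    { toFun v := (fun j => f (v j) : B.Induced N)
      map_add' v w := by funext j; exact map_add f.hom (v j) (w j)
      map_smul' g v := by
        funext j
        change f (∑ k, B.leftMul g j k • v k) = ∑ k, B.leftMul g j k • f (v k)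
        simp }

noncomputable def inductionAdjunction : B.induction ⊣ ModuleCat.restrictScalars i :=
  Adjunction.mkOfHomEquiv
    { homEquiv M X := ModuleCat.homEquiv.trans
        (B.liftEquiv.trans (ModuleCat.semilinearMapAddEquiv i M X).toEquiv)
      homEquiv_naturality_left_symm _ _ := rfl
      homEquiv_naturality_right _ _ := rfl }

instance : B.induction.Additive where

lemma induction_map_exact (S : ShortComplex (ModuleCat.{u} Λ)) (hS : S.Exact) :
    (S.map B.induction).Exact := by
  rw [ShortComplex.ShortExact.moduleCat_exact_iff_function_exact] at hS ⊢
  exact hS.comp_left (Fin B.n)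

lemma induction_preservesFiniteLimits_and_colimits :
    PreservesFiniteLimits B.induction ∧ PreservesFiniteColimits B.induction :=
  (B.induction.exact_tfae.out 1 3).mp B.induction_map_exact

instance : PreservesFiniteLimits B.induction := B.induction_preservesFiniteLimits_and_colimits.1

instance : PreservesFiniteColimits B.induction := B.induction_preservesFiniteLimits_and_colimits.2

instance : B.induction.PreservesProjectiveObjects :=
  Functor.preservesProjectiveObjects_of_adjunction_of_preservesEpimorphisms B.inductionAdjunction

noncomputable def inductionObjSelfIso : B.induction.obj (ModuleCat.of Λ Λ) ≅ ModuleCat.of Γ Γ :=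
  B.inducedSelfEquiv.toModuleIso

noncomputable def restrictScalarsInductionEquiv (M : ModuleCat.{u} Λ) :
    (ModuleCat.restrictScalars i).obj (B.induction.obj M) ≃ₗ[Λ]
      ∀ k, (ModuleCat.restrictScalars (B.twist k).toRingHom).obj M where
  toFun v k := v k
  invFun v k := v k
  map_add' _ _ := rfl
  map_smul' a v := by funext k; exact induced_map_smul_apply a v k
  left_inv _ := rfl
  right_inv _ := rfl

lemma injective_restrictScalars_induction {M : ModuleCat.{u} Λ} (hM : Injective M) :
    Injective ((ModuleCat.restrictScalars i).obj (B.induction.obj M)) := by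
  have (k : Fin B.n) : Injective ((ModuleCat.restrictScalars (B.twist k).toRingHom).obj M) :=
    ((ModuleCat.restrictScalarsEquivalenceOfRingEquiv (B.twist k)).map_injective_iff M).mpr hM
  exact Injective.of_iso
    ((ModuleCat.piIsoPi _).trans (B.restrictScalarsInductionEquiv M).toModuleIso.symm)
    inferInstance

lemma preservesInjectiveObjects_induction (hi : i.IsRightProjectiveExt) :
    B.induction.PreservesInjectiveObjects :=
  ⟨fun hM => hi.injective_of_injective_restrictScalars (B.injective_restrictScalars_induction hM)⟩

end NormalizingBasis

end RingHom

theorem exists_injectiveResolution_of_isExcellentExtension_general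
    (i : Λ →+* Γ) (hexc : i.IsExcellentExtension)
    (h : ∃ I : InjectiveResolution (ModuleCat.of Λ Λ),
      ∀ n : ℕ, projDim Λ (I.cocomplex.X n) ≤ (n : ℕ∞)) :
    ∃ J : InjectiveResolution (ModuleCat.of Γ Γ),
      ∀ n : ℕ, projDim Γ (J.cocomplex.X n) ≤ (n : ℕ∞) := by
  obtain ⟨I, hI⟩ := h
  obtain ⟨n, γ, hleft, hright, hnormal⟩ := hexc.free_common_basis
  let B : i.NormalizingBasis := ⟨n, γ, hright, hleft.1, hnormal⟩
  have := B.preservesInjectiveObjects_induction hexc.rightProjective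
  exact ⟨(B.induction.mapInjectiveResolution I).ofIso B.inductionObjSelfIso,
    fun k => (projDim_map_le B.induction _).trans (hI k)⟩

/-- Let `Γ` be an excellent extension of an Artin algebra `Λ`. If `Λ` admits an injective
resolution `0 → Λ → I⁰ → I¹ → ⋯` as a left `Λ`-module with `pd_Λ I^n ≤ n` for all `n ≥ 0`,
then `Γ` admits an injective resolution `0 → Γ → J⁰ → J¹ → ⋯` as a left `Γ`-module with
`pd_Γ J^n ≤ n` for all `n ≥ 0`. -/
theorem exists_injectiveResolution_of_isExcellentExtension
    (R : Type u) [CommRing R] [IsArtinianRing R] [Algebra R Λ] [Module.Finite R Λ]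
    (i : Λ →+* Γ) (hexc : i.IsExcellentExtension)
    (h : ∃ I : InjectiveResolution (ModuleCat.of Λ Λ),
      ∀ n : ℕ, projDim Λ (I.cocomplex.X n) ≤ (n : ℕ∞)) :
    ∃ J : InjectiveResolution (ModuleCat.of Γ Γ),
      ∀ n : ℕ, projDim Γ (J.cocomplex.X n) ≤ (n : ℕ∞) :=
  exists_injectiveResolution_of_isExcellentExtension_general i hexc h
end

section
/- Let Λ be an Artin algebra, G a finite group of order n acting on Λ by ring automorphisms with n invertible in Λ, and Γ = ΛG the skew group algebra. Let M and N be finitely generated left Λ-modules with N G-stable. Then there is an isomorphism of abelian groups Hom_Γ(F M, F N) ≅ (Hom_Λ(M, N))^n, where F = Γ ⊗_Λ −. -/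
open CategoryTheory Limits DirectSum

universe u

variable {Λ Γ G : Type u} [Ring Λ] [Ring Γ] [Group G] [Fintype G]

/-- The twisted module `{}^σM`: same underlying abelian group as `M`, with the `Λ`-action
`λ · x = σ⁻¹(λ)x`; that is, restriction of scalars along the automorphism `σ⁻¹`. -/
noncomputable def twistModule (φ : G →* RingAut Λ) (σ : G) (M : ModuleCat.{u} Λ) :
    ModuleCat.{u} Λ :=
  (ModuleCat.restrictScalars ((φ σ)⁻¹ : RingAut Λ).toRingHom).obj M

/-- A left `Λ`-module `N` is `G`-stable if `{}^σN ≅ N` for every `σ ∈ G`. -/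
def IsGStable (φ : G →* RingAut Λ) (N : ModuleCat.{u} Λ) : Prop :=
  ∀ σ : G, Nonempty (twistModule φ σ N ≅ N)

/-!
The induced module `Γ ⊗_Λ N` is modelled on `G → N`, a function `c` standing for
`∑ σ, g σ ⊗ c σ`, with `Γ` acting through the coordinates of `Γ` in the basis `(g σ)_σ`. This
model has the universal property of induction, so it is isomorphic to `F N`. As a `Λ`-module it
is `⨁ σ, g σ ⊗ N`, and `λ (g σ ⊗ x) = g σ ⊗ σ⁻¹(λ) x` identifies `g σ ⊗ N` with `{}^σN`. Hence
`Hom_Γ(F M, F N) ≅ Hom_Λ(M, ⨁ σ, {}^σN) ≅ ∏ σ, Hom_Λ(M, {}^σN)`, and `G`-stability of `N` turns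
each factor into `Hom_Λ(M, N)`.
-/

omit [Fintype G] in
lemma twistModule_smul (φ : G →* RingAut Λ) (σ : G) (N : ModuleCat.{u} Λ) (a : Λ)
    (y : twistModule φ σ N) : a • y = (φ σ⁻¹ a • (show N from y) : N) := by
  rw [map_inv]
  rfl

namespace IsSkewGroupAlgebra

open ModuleCat

variable {φ : G →* RingAut Λ} {i : Λ →+* Γ} {g : G →* Γˣ}

omit [Fintype G] in
lemma aut_apply_inv_apply (σ : G) (a : Λ) : φ σ (φ σ⁻¹ a) = a := by
  simp [map_inv]

omit [Fintype G] in
lemma aut_mul_apply (σ τ : G) (a : Λ) : φ (σ * τ) a = φ σ (φ τ a) := by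
  simp [map_mul]

variable (φ) in
def skewMul (a b : G → Λ) : G → Λ := fun ρ => ∑ τ, a τ * φ τ (b (τ⁻¹ * ρ))

section IndSMul

variable {V : Type u} [AddCommGroup V] [Module Λ V]

variable (φ) in
/-- If `c` stands for `∑ σ, g σ ⊗ c σ ∈ Γ ⊗_Λ V`, this is the action of `∑ τ, a τ g τ ∈ Γ`,
computed from `(a g τ) (g ρ ⊗ x) = g (τ ρ) ⊗ φ (τ ρ)⁻¹ a • x`. -/
def indSMul (a : G → Λ) (c : G → V) : G → V :=
  fun σ => ∑ τ, φ σ⁻¹ (a τ) • c (τ⁻¹ * σ)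

lemma indSMul_single [DecidableEq G] (τ : G) (a : Λ) (c : G → V) (σ : G) :
    indSMul φ (Pi.single τ a) c σ = φ σ⁻¹ a • c (τ⁻¹ * σ) := by
  rw [indSMul, Fintype.sum_eq_single τ fun ρ hρ => by simp [hρ], Pi.single_eq_same]

lemma indSMul_add (a : G → Λ) (c d : G → V) :
    indSMul φ a (c + d) = indSMul φ a c + indSMul φ a d := by
  funext σ; simp [indSMul, Finset.sum_add_distrib]

lemma indSMul_zero (a : G → Λ) : indSMul φ a (0 : G → V) = 0 := by
  funext σ; simp [indSMul]

lemma add_indSMul (a b : G → Λ) (c : G → V) :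
    indSMul φ (a + b) c = indSMul φ a c + indSMul φ b c := by
  funext σ; simp [indSMul, add_smul, Finset.sum_add_distrib]

lemma zero_indSMul (c : G → V) : indSMul φ (0 : G → Λ) c = 0 := by
  funext σ; simp [indSMul]

lemma indSMul_skewMul (a b : G → Λ) (c : G → V) :
    indSMul φ (skewMul φ a b) c = indSMul φ a (indSMul φ b c) := by
  funext σ
  simp only [indSMul, skewMul, map_sum, map_mul, Finset.sum_smul, mul_smul, Finset.smul_sum]
  rw [Finset.sum_comm]
  refine Finset.sum_congr rfl fun τ _ => Fintype.sum_equiv (Equiv.mulLeft τ⁻¹) _ _ fun ρ => ?_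
  have hφ : φ σ⁻¹ (φ τ (b (τ⁻¹ * ρ))) = φ (τ⁻¹ * σ)⁻¹ (b (τ⁻¹ * ρ)) := by
    rw [mul_inv_rev, inv_inv, ← aut_mul_apply]
  simp only [Equiv.coe_mulLeft, hφ, show (τ⁻¹ * ρ)⁻¹ * (τ⁻¹ * σ) = ρ⁻¹ * σ by group]

end IndSMul

variable (i g) in
def sumBasis : (G → Λ) →+ Γ where
  toFun c := ∑ σ, i (c σ) * g σ
  map_zero' := by simp
  map_add' c d := by simp [add_mul, Finset.sum_add_distrib]

variable (h : IsSkewGroupAlgebra φ i g)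

include h in
lemma basis_mul_basis (a b : Λ) (σ τ : G) :
    (i a * g σ) * (i b * g τ) = i (a * φ σ b) * g (σ * τ) := by
  rw [map_mul, map_mul, Units.val_mul, mul_assoc, ← mul_assoc (g σ : Γ), h.comm, mul_assoc,
    mul_assoc]

include h in
lemma sum_skewMul (a b : G → Λ) :
    ∑ ρ, i (skewMul φ a b ρ) * g ρ = (∑ σ, i (a σ) * g σ) * ∑ τ, i (b τ) * g τ := by
  simp_rw [Finset.sum_mul_sum, h.basis_mul_basis]
  have reindex : ∀ σ, ∑ τ, i (a σ * φ σ (b τ)) * g (σ * τ)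
      = ∑ ρ, i (a σ * φ σ (b (σ⁻¹ * ρ))) * g ρ := fun σ =>
    Fintype.sum_equiv (Equiv.mulLeft σ) _ _ fun τ => by simp
  simp_rw [reindex, skewMul, map_sum, Finset.sum_mul]
  exact Finset.sum_comm

noncomputable def coords : Γ ≃+ (G → Λ) :=
  (AddEquiv.ofBijective (sumBasis i g) h.free).symm

lemma sum_coords (x : Γ) : ∑ σ, i (coords h x σ) * g σ = x :=
  (AddEquiv.ofBijective (sumBasis i g) h.free).apply_symm_apply x

lemma coords_sum (c : G → Λ) : coords h (∑ σ, i (c σ) * g σ) = c :=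
  (AddEquiv.ofBijective (sumBasis i g) h.free).symm_apply_apply c

lemma coords_basis [DecidableEq G] (a : Λ) (τ : G) : coords h (i a * g τ) = Pi.single τ a := by
  conv_rhs => rw [← h.coords_sum (Pi.single τ a)]
  congr 1
  rw [Fintype.sum_eq_single τ fun σ hσ => by simp [hσ], Pi.single_eq_same]

lemma coords_one [DecidableEq G] : coords h 1 = Pi.single 1 1 := by
  simpa using h.coords_basis 1 1

lemma coords_mul (x y : Γ) : coords h (x * y) = skewMul φ (coords h x) (coords h y) := by
  conv_lhs => rw [← h.sum_coords x, ← h.sum_coords y, ← h.sum_skewMul]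
  exact h.coords_sum _

/-- The induced module `Γ ⊗_Λ V`. -/
def Induced (_ : IsSkewGroupAlgebra φ i g) (V : Type u) : Type u := G → V

section Induced

variable {V : Type u} [AddCommGroup V]

instance : AddCommGroup (h.Induced V) := Pi.addCommGroup

@[simp]
lemma Induced.add_apply (c d : h.Induced V) (σ : G) : (c + d) σ = c σ + d σ := rfl

lemma Induced.sum_apply {ι : Type*} (s : Finset ι) (c : ι → h.Induced V) (σ : G) :
    (∑ j ∈ s, c j) σ = ∑ j ∈ s, c j σ :=
  Finset.sum_apply σ s c

section Tmul

variable [DecidableEq G]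

/-- The pure tensor `g σ ⊗ x`. -/
def tmul (σ : G) (x : V) : h.Induced V := Pi.single σ x

lemma tmul_apply (σ : G) (x : V) (ρ : G) : h.tmul σ x ρ = (Pi.single σ x : G → V) ρ := rfl

lemma tmul_add (σ : G) (x y : V) : h.tmul σ (x + y) = h.tmul σ x + h.tmul σ y :=
  Pi.single_add (f := fun _ => V) σ x y

lemma sum_tmul (c : h.Induced V) : ∑ σ, h.tmul σ (c σ) = c :=
  Finset.univ_sum_single c

end Tmul

variable [Module Λ V]

noncomputable instance : Module Γ (h.Induced V) := by
  classical
  exact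
  { smul γ c := indSMul φ (coords h γ) c
    one_smul c := by
      change indSMul φ (coords h 1) c = c
      rw [h.coords_one]
      exact funext fun σ => (indSMul_single 1 1 c σ).trans (by simp)
    mul_smul x y c := by
      change indSMul φ (coords h (x * y)) c = _
      rw [h.coords_mul]
      exact indSMul_skewMul _ _ _
    smul_zero γ := indSMul_zero _
    smul_add γ := indSMul_add _
    add_smul x y c := by
      change indSMul φ (coords h (x + y)) c = _
      rw [map_add]
      exact add_indSMul _ _ _
    zero_smul c := by
      change indSMul φ (coords h 0) c = _
      rw [map_zero]
      exact zero_indSMul _ }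

lemma basis_smul_apply (a : Λ) (τ : G) (c : h.Induced V) (σ : G) :
    ((i a * g τ) • c) σ = φ σ⁻¹ a • c (τ⁻¹ * σ) := by
  classical
  exact (congrArg (indSMul φ · c σ) (h.coords_basis a τ)).trans (indSMul_single τ a c σ)

lemma of_smul_apply (a : Λ) (c : h.Induced V) (σ : G) : (i a • c) σ = φ σ⁻¹ a • c σ := by
  simpa using h.basis_smul_apply a 1 c σ

lemma unit_smul_apply (τ : G) (c : h.Induced V) (σ : G) : ((g τ : Γ) • c) σ = c (τ⁻¹ * σ) := by
  simpa using h.basis_smul_apply 1 τ c σ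

variable [DecidableEq G]

lemma of_smul_tmul_one (a : Λ) (x : V) : i a • h.tmul 1 x = h.tmul 1 (a • x) := by
  funext σ
  rw [of_smul_apply]
  by_cases hσ : σ = 1 <;> simp [hσ, tmul_apply]

lemma unit_smul_tmul_one (τ : G) (x : V) : (g τ : Γ) • h.tmul 1 x = h.tmul τ x := by
  funext σ
  rw [unit_smul_apply]
  by_cases hσ : σ = τ
  · simp [hσ, tmul_apply]
  · simp [hσ, tmul_apply, inv_mul_eq_one, Ne.symm hσ]

end Induced

noncomputable abbrev ind (N : ModuleCat.{u} Λ) : ModuleCat.{u} Γ := ModuleCat.of Γ (h.Induced N)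

variable {N : ModuleCat.{u} Λ} {Y : ModuleCat.{u} Γ}

lemma sum_unit_smul_basis_smul (u : N ⟶ (restrictScalars i).obj Y) (a : Λ) (τ : G)
    (c : h.Induced N) :
    ∑ σ, (g σ : Γ) • u (((i a * g τ) • c) σ) = (i a * g τ) • ∑ σ, (g σ : Γ) • u (c σ) := by
  have hlin : ∀ (b : Λ) (x : N), (u (b • x) : Y) = i b • u x := fun b x => u.hom.map_smul b x
  have hu : ∀ σ, (g σ : Γ) • u (φ σ⁻¹ a • c (τ⁻¹ * σ))
      = (i a * g τ) • (g (τ⁻¹ * σ) : Γ) • u (c (τ⁻¹ * σ)) := fun σ => by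
    rw [hlin, smul_smul, smul_smul, h.comm, aut_apply_inv_apply,
      mul_assoc, ← Units.val_mul, ← map_mul, mul_inv_cancel_left]
  simp_rw [basis_smul_apply, hu, Finset.smul_sum]
  exact Fintype.sum_equiv (Equiv.mulLeft τ⁻¹) _ _ fun σ => rfl

noncomputable def indLift (u : N ⟶ (restrictScalars i).obj Y) : h.ind N ⟶ Y :=
  ofHom
  { toFun c := ∑ σ, (g σ : Γ) • u (c σ)
    map_add' c d := by
      simp only [Induced.add_apply, map_add, smul_add]
      exact Finset.sum_add_distrib
    map_smul' γ c := by
      obtain ⟨a, rfl⟩ : ∃ a, γ = ∑ τ, i (a τ) * g τ := ⟨coords h γ, (h.sum_coords γ).symm⟩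
      simp only [Finset.sum_smul, Induced.sum_apply, map_sum, Finset.smul_sum, RingHom.id_apply]
      refine Finset.sum_comm.trans (Finset.sum_congr rfl fun τ _ => ?_)
      exact h.sum_unit_smul_basis_smul u (a τ) τ c }

variable [DecidableEq G]

variable (N) in
noncomputable def indUnit : N ⟶ (restrictScalars i).obj (h.ind N) :=
  ofHom (Y := (restrictScalars i).obj (h.ind N))
  { toFun x := h.tmul 1 x
    map_add' := h.tmul_add 1
    map_smul' a x := (h.of_smul_tmul_one a x).symm }

noncomputable def indHomEquiv (N : ModuleCat.{u} Λ) (Y : ModuleCat.{u} Γ) :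
    (h.ind N ⟶ Y) ≃ (N ⟶ (restrictScalars i).obj Y) where
  toFun f := h.indUnit N ≫ (restrictScalars i).map f
  invFun := h.indLift
  left_inv f := by
    ext c
    change ∑ σ, (g σ : Γ) • f (h.tmul 1 (c σ)) = f c
    simp_rw [← map_smul, unit_smul_tmul_one, ← map_sum, sum_tmul]
  right_inv u := by
    ext x
    change ∑ σ, (g σ : Γ) • u (h.tmul 1 x σ) = u x
    rw [Fintype.sum_eq_single 1 fun σ hσ => by simp [tmul_apply, hσ]]
    simp [tmul_apply]

lemma indHomEquiv_comp (N : ModuleCat.{u} Λ) {Y Y' : ModuleCat.{u} Γ} (f : h.ind N ⟶ Y)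
    (f' : Y ⟶ Y') :
    h.indHomEquiv N Y' (f ≫ f') = h.indHomEquiv N Y f ≫ (restrictScalars i).map f' := by
  simp [indHomEquiv]

noncomputable def induction : ModuleCat.{u} Λ ⥤ ModuleCat.{u} Γ :=
  Adjunction.leftAdjointOfEquiv h.indHomEquiv fun N _ _ f' f => h.indHomEquiv_comp N f f'

noncomputable def inductionAdjunction : h.induction ⊣ restrictScalars i :=
  Adjunction.adjunctionOfEquivLeft _ _

/-- As a `Λ`-module, `Γ ⊗_Λ N = ⨁ σ, g σ ⊗ N` with `g σ ⊗ N ≅ {}^σN`, so maps into it are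
families of maps into the twisted modules. -/
noncomputable def homRestrictIndEquiv (M N : ModuleCat.{u} Λ) :
    (M ⟶ (restrictScalars i).obj (h.ind N)) ≃+ ∀ σ, (M ⟶ twistModule φ σ N) where
  toFun u σ := ofHom (Y := twistModule φ σ N)
    { toFun x := u x σ
      map_add' x y := congrArg (· σ) (map_add u.hom x y)
      map_smul' a x := (congrArg (· σ) (u.hom.map_smul a x)).trans <|
        (h.of_smul_apply a (u x) σ).trans (twistModule_smul φ σ N a _).symm }
  invFun w := ofHom (Y := (restrictScalars i).obj (h.ind N))
    { toFun x := show h.Induced N from fun σ => w σ x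
      map_add' x y := funext fun σ => map_add (w σ).hom x y
      map_smul' a x := funext fun σ => ((w σ).hom.map_smul a x).trans <|
        (twistModule_smul φ σ N a _).trans (h.of_smul_apply a (fun σ => w σ x) σ).symm }
  left_inv _ := rfl
  right_inv _ := rfl
  map_add' _ _ := rfl

end IsSkewGroupAlgebra

theorem hom_induction_equiv_pow_general
    (φ : G →* RingAut Λ) (i : Λ →+* Γ) (g : G →* Γˣ)
    (hskew : IsSkewGroupAlgebra φ i g)
    (F : ModuleCat.{u} Λ ⥤ ModuleCat.{u} Γ)
    (adj : F ⊣ ModuleCat.restrictScalars i)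
    (M N : ModuleCat.{u} Λ)
    (hNstable : IsGStable φ N) :
    Nonempty ((F.obj M ⟶ F.obj N) ≃+ (Fin (Fintype.card G) → (M ⟶ N))) := by
  classical
  have : F.Additive := adj.left_adjoint_additive
  let indIso : F.obj N ≅ hskew.ind N := (adj.leftAdjointUniq hskew.inductionAdjunction).app N
  let postcomp {X Y : ModuleCat.{u} Λ} (e : X ≅ Y) : (M ⟶ X) ≃+ (M ⟶ Y) :=
    (Linear.homCongr ℤ (Iso.refl M) e).toAddEquiv
  exact ⟨(adj.homAddEquiv M (F.obj N)).trans <|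
    (postcomp ((ModuleCat.restrictScalars i).mapIso indIso)).trans <|
    (hskew.homRestrictIndEquiv M N).trans <|
    (AddEquiv.piCongrRight fun σ => postcomp (hNstable σ).some).trans <|
    AddEquiv.arrowCongr (Fintype.equivFin G) (AddEquiv.refl _)⟩

/-- Let `Λ` be an Artin algebra, `G` a finite group of order `n` acting on `Λ` with `n`
invertible in `Λ`, and `Γ = ΛG` the skew group algebra. For finitely generated left
`Λ`-modules `M` and `N` with `N` `G`-stable, there is an isomorphism of abelian groups
`Hom_Γ(F M, F N) ≅ (Hom_Λ(M, N))ⁿ`, where `F = Γ ⊗_Λ -` is the induction functor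
(encoded as a left adjoint of the restriction of scalars functor). -/
theorem hom_induction_equiv_pow
    (R : Type u) [CommRing R] [IsArtinianRing R] [Algebra R Λ] [Module.Finite R Λ]
    (φ : G →* RingAut Λ) (i : Λ →+* Γ) (g : G →* Γˣ)
    (hskew : IsSkewGroupAlgebra φ i g)
    (hinv : IsUnit (Fintype.card G : Λ))
    (F : ModuleCat.{u} Λ ⥤ ModuleCat.{u} Γ)
    (adj : F ⊣ ModuleCat.restrictScalars i)
    (M N : ModuleCat.{u} Λ) (hM : Module.Finite Λ M) (hN : Module.Finite Λ N)
    (hNstable : IsGStable φ N) :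
    Nonempty ((F.obj M ⟶ F.obj N) ≃+ (Fin (Fintype.card G) → (M ⟶ N))) :=
  hom_induction_equiv_pow_general φ i g hskew F adj M N hNstable
end
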